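/- arXiv:1307.2066 — 2 statements merged into one kernel-verified Lean document; each statement's English description precedes it below -/
import Mathlib

section
/- There is an absolute constant $C$ with the following property. Let $s \ge 2$ be an integer and let $\mathcal{P}$ be a finite nonempty set of primes such that $\gcd(s, p-1) > 1$ for every $p \in \mathcal{P}$; put $P = |\mathcal{P}|$. For each $p \in \mathcal{P}$ let $\chi_p$ be a non-principal Dirichlet character modulo $p$ with $\chi_p^s$ equal to the principal character (so that $\chi_p(n^s) = 1$ whenever $p \nmid n$). Let $w : \mathbb{N} \to [0,\infty)$ satisfy $\sum_{n} w(n) < \infty$, $w(0) = 0$, and $w(n) = 0$ for all $n \ge e^{P}$. Then $\sum_{n=1}^{\infty} w(n^s) \le C \left( P^{-1} \sum_{n=1}^{\infty} w(n) + P^{-2} \sum_{\substack{p, q \in \mathcal{P} \\ p \ne q}} \left| \sum_{n=1}^{\infty} w(n) \chi_p(n) \overline{\chi_q(n)} \right| \right)$. -/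
/-!
Put `T(m) = ∑_{p ∈ P} χ_p(m)`. Since `χ_p ^ s = 1`, `χ_p(n ^ s)` is `1` if `p ∤ n` and `0`
otherwise, so `T(n ^ s)` counts the primes of `P` not dividing `n`. If `w(n ^ s) ≠ 0` then
`2 ^ (2k) ≤ n ^ 2 ≤ n ^ s < e ^ |P|`, where `k` is the number of primes of `P` dividing `n`, so
`k < |P| / (2 log 2) < 3|P| / 4` and `|T(n ^ s)| ≥ |P| / 4`. Therefore
`|P|² ∑ w(n ^ s) ≤ 16 ∑_m w(m) |T(m)|²`, and expanding `|T(m)|² = ∑_{p,q} χ_p(m) conj χ_q(m)`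
bounds the right side by `16` times the diagonal `|P| ∑ w(m)` plus the off-diagonal sums.
-/

open Finset Real

open Classical in
theorem MulChar.apply_pow_eq_ite {R R' : Type*} [CommMonoid R] [CommMonoidWithZero R']
    (χ : MulChar R R') {s : ℕ} (hs : s ≠ 0) (hχ : χ ^ s = 1) (a : R) :
    χ (a ^ s) = if IsUnit a then 1 else 0 := by
  split_ifs with ha
  · rw [map_pow, ← MulChar.pow_apply' χ hs, hχ, MulChar.one_apply ha]
  · exact χ.map_nonunit (mt (isUnit_pow_iff hs).mp ha)

theorem ZMod.isUnit_natCast_iff_not_dvd {p : ℕ} (hp : p.Prime) (m : ℕ) :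
    IsUnit (m : ZMod p) ↔ ¬p ∣ m := by
  rw [ZMod.isUnit_iff_coprime, Nat.coprime_comm, hp.coprime_iff_not_dvd]

theorem sum_dirichletCharacter_natCast_pow {s : ℕ} (hs : s ≠ 0) {P : Finset ℕ}
    (hP : ∀ p ∈ P, p.Prime) (χ : (p : ℕ) → DirichletCharacter ℂ p)
    (hχ : ∀ p ∈ P, χ p ^ s = 1) (m : ℕ) :
    ∑ p ∈ P, χ p ((m ^ s : ℕ) : ZMod p) = #{p ∈ P | ¬p ∣ m} := by
  rw [card_filter, Nat.cast_sum]
  refine sum_congr rfl fun p hp => ?_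
  rw [Nat.cast_pow, (χ p).apply_pow_eq_ite hs (hχ p hp)]
  simp [ZMod.isUnit_natCast_iff_not_dvd (hP p hp), apply_ite]

theorem two_pow_card_filter_dvd_le {P : Finset ℕ} (hP : ∀ p ∈ P, p.Prime) {m : ℕ} (hm : m ≠ 0) :
    2 ^ #{p ∈ P | p ∣ m} ≤ m :=
  calc 2 ^ #{p ∈ P | p ∣ m}
      ≤ ∏ p ∈ {p ∈ P | p ∣ m}, p :=
        pow_card_le_prod _ _ _ fun p hp => (hP p (mem_filter.mp hp).1).two_le
    _ ≤ m := Nat.le_of_dvd (Nat.pos_of_ne_zero hm) <|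
        prod_primes_dvd m (fun p hp => (hP p (mem_filter.mp hp).1).prime)
          fun _ hp => (mem_filter.mp hp).2

theorem card_le_four_mul_card_filter_not_dvd {P : Finset ℕ} (hP : ∀ p ∈ P, p.Prime) {m : ℕ}
    (hm : m ≠ 0) (hlt : (m : ℝ) ^ 2 < exp #P) :
    (#P : ℝ) ≤ 4 * #{p ∈ P | ¬p ∣ m} := by
  have hsplit := card_filter_add_card_filter_not (s := P) (fun p => p ∣ m)
  have hpow : ((2 : ℝ) ^ #{p ∈ P | p ∣ m}) ^ 2 < exp #P :=
    lt_of_le_of_lt (by gcongr; exact_mod_cast two_pow_card_filter_dvd_le hP hm) hlt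
  have hlog : 2 * #{p ∈ P | p ∣ m} * log 2 < #P := by
    rw [← pow_mul, ← log_lt_iff_lt_exp (by positivity), log_pow] at hpow
    push_cast at hpow
    linarith
  have := log_two_gt_d9
  have hcast : (#{p ∈ P | p ∣ m} : ℝ) + #{p ∈ P | ¬p ∣ m} = #P := by exact_mod_cast hsplit
  nlinarith

theorem sum_mul_norm_sum_sq_le_sum_sum_norm {ι κ : Type*} (S : Finset κ) (P : Finset ι) (w : κ → ℝ)
    (a : ι → κ → ℂ) :
    ∑ m ∈ S, w m * ‖∑ p ∈ P, a p m‖ ^ 2 ≤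
      ∑ p ∈ P, ∑ q ∈ P, ‖∑ m ∈ S, (w m : ℂ) * a p m * starRingEnd ℂ (a q m)‖ := by
  have hexpand : ((∑ m ∈ S, w m * ‖∑ p ∈ P, a p m‖ ^ 2 : ℝ) : ℂ) =
      ∑ p ∈ P, ∑ q ∈ P, ∑ m ∈ S, (w m : ℂ) * a p m * starRingEnd ℂ (a q m) := by
    push_cast
    simp_rw [← Complex.mul_conj', map_sum, sum_mul_sum, mul_sum, ← mul_assoc]
    rw [sum_comm]
    exact sum_congr rfl fun p _ => sum_comm
  calc ∑ m ∈ S, w m * ‖∑ p ∈ P, a p m‖ ^ 2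
      ≤ ‖((∑ m ∈ S, w m * ‖∑ p ∈ P, a p m‖ ^ 2 : ℝ) : ℂ)‖ := by
        rw [Complex.norm_real]; exact le_abs_self _
    _ ≤ _ := by
        rw [hexpand]
        exact (norm_sum_le _ _).trans (sum_le_sum fun p _ => norm_sum_le _ _)

theorem norm_sum_mul_mul_conj_le {κ : Type*} (S : Finset κ) {w : κ → ℝ} (hw : ∀ m, 0 ≤ w m)
    {a b : κ → ℂ} (ha : ∀ m, ‖a m‖ ≤ 1) (hb : ∀ m, ‖b m‖ ≤ 1) :
    ‖∑ m ∈ S, (w m : ℂ) * a m * starRingEnd ℂ (b m)‖ ≤ ∑ m ∈ S, w m := by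
  refine (norm_sum_le _ _).trans (sum_le_sum fun m _ => ?_)
  rw [norm_mul, norm_mul, Complex.norm_conj, Complex.norm_real, Real.norm_of_nonneg (hw m),
    mul_assoc]
  exact mul_le_of_le_one_right (hw m) (mul_le_one₀ (ha m) (norm_nonneg _) (hb m))

theorem sum_sum_norm_le_card_mul_add {ι κ : Type*} [DecidableEq ι] (S : Finset κ) (P : Finset ι)
    {w : κ → ℝ} (hw : ∀ m, 0 ≤ w m) {a : ι → κ → ℂ} (ha : ∀ p m, ‖a p m‖ ≤ 1) :
    ∑ p ∈ P, ∑ q ∈ P, ‖∑ m ∈ S, (w m : ℂ) * a p m * starRingEnd ℂ (a q m)‖ ≤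
      #P * ∑ m ∈ S, w m +
        ∑ p ∈ P, ∑ q ∈ P.erase p, ‖∑ m ∈ S, (w m : ℂ) * a p m * starRingEnd ℂ (a q m)‖ := by
  rw [sum_congr rfl fun p hp => (add_sum_erase P _ hp).symm, sum_add_distrib, ← nsmul_eq_mul,
    ← sum_const]
  gcongr with p
  exact norm_sum_mul_mul_conj_le S hw (ha p) (ha p)

theorem sum_range_comp_pow_le {M : Type*} [AddCommMonoid M] [PartialOrder M]
    [IsOrderedAddMonoid M] {F : ℕ → M} (hF : ∀ m, 0 ≤ F m) {s : ℕ} (hs : s ≠ 0) (N : ℕ) :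
    ∑ n ∈ range N, F (n ^ s) ≤ ∑ m ∈ range (N ^ s), F m := by
  rw [← sum_image (Nat.pow_left_injective hs).injOn]
  refine sum_le_sum_of_subset_of_nonneg (fun m hm => ?_) fun m _ _ => hF m
  obtain ⟨n, hn, rfl⟩ := mem_image.mp hm
  exact mem_range.mpr (Nat.pow_lt_pow_left (mem_range.mp hn) hs)

theorem card_sq_le_sixteen_mul_norm_sum_sq {s : ℕ} (hs : 2 ≤ s) {P : Finset ℕ}
    (hP : ∀ p ∈ P, p.Prime) (χ : (p : ℕ) → DirichletCharacter ℂ p)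
    (hχ : ∀ p ∈ P, χ p ^ s = 1) {n : ℕ} (hn : n ≠ 0) (hlt : ((n ^ s : ℕ) : ℝ) < exp #P) :
    (#P : ℝ) ^ 2 ≤ 16 * ‖∑ p ∈ P, χ p ((n ^ s : ℕ) : ZMod p)‖ ^ 2 := by
  rw [sum_dirichletCharacter_natCast_pow (by omega) hP χ hχ, Complex.norm_natCast]
  have hsq : (n : ℝ) ^ 2 ≤ (n : ℝ) ^ s :=
    pow_le_pow_right₀ (by exact_mod_cast Nat.one_le_iff_ne_zero.mpr hn) hs
  have hcard := card_le_four_mul_card_filter_not_dvd hP hn (by push_cast at hlt; linarith)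
  calc (#P : ℝ) ^ 2 ≤ (4 * #{p ∈ P | ¬p ∣ n}) ^ 2 := by gcongr
    _ = _ := by ring

theorem card_sq_mul_sum_range_pow_le {s : ℕ} (hs : 2 ≤ s) {P : Finset ℕ}
    (hP : ∀ p ∈ P, p.Prime) (χ : (p : ℕ) → DirichletCharacter ℂ p)
    (hχ : ∀ p ∈ P, χ p ^ s = 1) {w : ℕ → ℝ} (hw : ∀ n, 0 ≤ w n) (hw0 : w 0 = 0)
    (hwexp : ∀ n : ℕ, exp #P ≤ n → w n = 0) (N : ℕ) :
    (#P : ℝ) ^ 2 * ∑ n ∈ range N, w (n ^ s) ≤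
      16 * (#P * ∑ m ∈ range (N ^ s), w m +
        ∑ p ∈ P, ∑ q ∈ P.erase p,
          ‖∑ m ∈ range (N ^ s), (w m : ℂ) * χ p m * starRingEnd ℂ (χ q m)‖) := by
  set T : ℕ → ℂ := fun m => ∑ p ∈ P, χ p m
  have hpoint : ∀ n, (#P : ℝ) ^ 2 * w (n ^ s) ≤ 16 * (w (n ^ s) * ‖T (n ^ s)‖ ^ 2) := by
    intro n
    by_cases hwn : w (n ^ s) = 0
    · simp [hwn]
    have hn : n ≠ 0 := by rintro rfl; simp [zero_pow (by omega : s ≠ 0), hw0] at hwn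
    have hlt : ((n ^ s : ℕ) : ℝ) < exp #P := not_le.mp fun hle => hwn (hwexp _ hle)
    have := card_sq_le_sixteen_mul_norm_sum_sq hs hP χ hχ hn hlt
    nlinarith [hw (n ^ s)]
  calc (#P : ℝ) ^ 2 * ∑ n ∈ range N, w (n ^ s)
      ≤ 16 * ∑ n ∈ range N, w (n ^ s) * ‖T (n ^ s)‖ ^ 2 := by
        rw [mul_sum, mul_sum]; exact sum_le_sum fun n _ => hpoint n
    _ ≤ 16 * ∑ m ∈ range (N ^ s), w m * ‖T m‖ ^ 2 := by
        gcongr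
        exact sum_range_comp_pow_le (F := fun m => w m * ‖T m‖ ^ 2)
          (fun m => mul_nonneg (hw m) (sq_nonneg _)) (by omega : s ≠ 0) N
    _ ≤ _ := by
        gcongr
        exact (sum_mul_norm_sum_sq_le_sum_sum_norm _ _ _ _).trans
          (sum_sum_norm_le_card_mul_add _ _ hw fun p m => (χ p).norm_le_one _)

theorem stmt_1 :
    ∃ C : ℝ, 0 < C ∧
      ∀ (s : ℕ), 2 ≤ s →
      ∀ (P : Finset ℕ), P.Nonempty →
      (∀ p ∈ P, p.Prime) →
      (∀ p ∈ P, 1 < Nat.gcd s (p - 1)) →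
      ∀ (χ : (p : ℕ) → DirichletCharacter ℂ p),
      (∀ p ∈ P, χ p ≠ 1) →
      (∀ p ∈ P, (χ p) ^ s = 1) →
      ∀ (w : ℕ → ℝ), (∀ n, 0 ≤ w n) → Summable w → w 0 = 0 →
      (∀ n : ℕ, Real.exp P.card ≤ (n : ℝ) → w n = 0) →
      ∑' n : ℕ, w (n ^ s) ≤
        C * ((P.card : ℝ)⁻¹ * ∑' n : ℕ, w n +
          ((P.card : ℝ) ^ 2)⁻¹ *
            ∑ p ∈ P, ∑ q ∈ P.erase p,
              ‖∑' n : ℕ, (w n : ℂ) * χ p (n : ZMod p) *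
                (starRingEnd ℂ) (χ q (n : ZMod q))‖) := by
  refine ⟨16, by norm_num, fun s hs P hPne hP _ χ _ hχ w hw _ hw0 hwexp => ?_⟩
  set N := ⌈exp #P⌉₊
  have hwN : ∀ n, N ≤ n → w n = 0 := fun n hn =>
    hwexp n ((Nat.le_ceil _).trans (by exact_mod_cast hn))
  have hwNs : ∀ n, n ∉ range (N ^ s) → w n = 0 := fun n hn =>
    hwN n ((Nat.le_self_pow (by omega) N).trans (not_lt.mp (mem_range.not.mp hn)))
  have hlhs : ∑' n, w (n ^ s) = ∑ n ∈ range N, w (n ^ s) := tsum_eq_sum fun n hn =>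
    hwN _ ((not_lt.mp (mem_range.not.mp hn)).trans (Nat.le_self_pow (by omega) n))
  have hcross : ∀ p q, ∑' n : ℕ, (w n : ℂ) * χ p n * starRingEnd ℂ (χ q n) =
      ∑ n ∈ range (N ^ s), (w n : ℂ) * χ p n * starRingEnd ℂ (χ q n) := fun p q =>
    tsum_eq_sum fun n hn => by simp [hwNs n hn]
  rw [hlhs, tsum_eq_sum hwNs]
  simp_rw [hcross]
  have hP0 : (0 : ℝ) < #P := by exact_mod_cast hPne.card_pos
  have hmain := card_sq_mul_sum_range_pow_le hs hP χ hχ hw hw0 hwexp N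
  rw [← le_div_iff₀' (by positivity)] at hmain
  refine hmain.trans_eq ?_
  field_simp
end

section
/- For a positive integer $u$, let $w(u) = \prod_{p \| u} p$ denote the product of the primes dividing $u$ exactly once (i.e. primes $p$ with $p \mid u$ but $p^2 \nmid u$). Then for every $\epsilon$ with $0 < \epsilon < 1/2$ there is a constant $C = C(\epsilon)$ such that for all real $U \ge 1$, $\sum_{U < u \le 2U} w(u)^{-1/2 + \epsilon} \le C\, U^{1/2 + \epsilon}$. -/
/-!
Write `u = w(u) t(u)` with `t(u)` squarefull and put `s = 1/2 - ε`. For `u > U` we have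
`w(u)^(-s) = (t(u)/u)^s ≤ U^(-s) t(u)^s`. Since `t(u) ∣ u`, a given value `t` is taken by at most
`N / t` of the `u ≤ N`, so `∑_{u ≤ N} t(u)^s ≤ N Z` with `Z = ∑_{t squarefull} t^(s-1)`. This
series converges: every squarefull `t` is `a² b³`, and `s - 1 < -1/2` makes both `∑ a^(2(s-1))` and
`∑ b^(3(s-1))` converge. Taking `N = ⌊2U⌋` gives `U^(-s) · 2U · Z = 2Z U^(1/2+ε)`.
-/

/-- The product of the primes dividing `u` exactly once. -/
def wpart (u : ℕ) : ℕ :=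
  ∏ p ∈ u.primeFactors.filter (fun p => u.factorization p = 1), p

open Finset Real

def Nat.Squarefull (n : ℕ) : Prop := ∀ p, p.Prime → p ∣ n → p ^ 2 ∣ n

theorem Nat.Squarefull.exists_sq_mul_cube_eq {t : ℕ} (ht : t.Squarefull) :
    ∃ a b : ℕ, a ^ 2 * b ^ 3 = t := by
  obtain ⟨d, c, rfl, hd⟩ := Nat.sq_mul_squarefree t
  rcases eq_or_ne c 0 with rfl | hc
  · exact ⟨0, 0, by simp⟩
  -- a prime of the squarefree `d` not dividing `c` would have `p² ∣ d`; so `d ∣ c` and `t = e² d³`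
  have hdc : d ∣ c := by
    rw [← Nat.prod_primeFactors_of_squarefree hd, Nat.prod_primeFactors_dvd_iff hc]
    intro p hpd
    have hp := Nat.prime_of_mem_primeFactors hpd
    refine Nat.mem_primeFactors_of_ne_zero hc |>.2 ⟨hp, ?_⟩
    by_contra hpc
    have hp2 : p ^ 2 ∣ c ^ 2 * d :=
      ht p hp (dvd_mul_of_dvd_right (Nat.dvd_of_mem_primeFactors hpd) _)
    have hp2d : p * p ∣ d := by
      rw [← sq]
      exact ((hp.coprime_iff_not_dvd.2 hpc).pow 2 2).dvd_of_dvd_mul_left hp2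
    exact hp.one_lt.ne' (Nat.isUnit_iff.mp (hd p hp2d))
  obtain ⟨e, rfl⟩ := hdc
  exact ⟨e, d, by ring⟩

theorem Nat.squarefull_one : (1 : ℕ).Squarefull :=
  fun _ hp h => absurd (Nat.eq_one_of_dvd_one h) hp.ne_one

theorem wpart_dvd (u : ℕ) : wpart u ∣ u :=
  (prod_dvd_prod_of_subset _ _ _ (filter_subset _ _)).trans (Nat.prod_primeFactors_dvd u)

theorem factorization_wpart (u p : ℕ) :
    (wpart u).factorization p = if u.factorization p = 1 then 1 else 0 := by
  rw [wpart, Nat.factorization_prod fun q hq =>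
      (Nat.prime_of_mem_primeFactors (mem_filter.1 hq).1).ne_zero,
    Finsupp.finsetSum_apply, sum_congr rfl fun q hq => by
    rw [(Nat.prime_of_mem_primeFactors (mem_filter.1 hq).1).factorization, Finsupp.single_apply],
    sum_ite_eq']
  simp only [mem_filter, ← Nat.support_factorization, Finsupp.mem_support_iff]
  split_ifs <;> omega

def squarefullPart (u : ℕ) : ℕ := u / wpart u

theorem wpart_mul_squarefullPart (u : ℕ) : wpart u * squarefullPart u = u :=
  Nat.mul_div_cancel' (wpart_dvd u)

theorem squarefullPart_ne_zero {u : ℕ} (hu : u ≠ 0) : squarefullPart u ≠ 0 := fun h =>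
  hu (by rw [← wpart_mul_squarefullPart u, h, mul_zero])

theorem squarefull_squarefullPart (u : ℕ) : (squarefullPart u).Squarefull := by
  intro p hp hpt
  rcases eq_or_ne u 0 with rfl | hu
  · simp [squarefullPart]
  have ht := squarefullPart_ne_zero hu
  rw [hp.dvd_iff_one_le_factorization ht] at hpt
  rw [hp.pow_dvd_iff_le_factorization ht]
  rw [squarefullPart, Nat.factorization_div (wpart_dvd u), Finsupp.tsub_apply,
    factorization_wpart] at hpt ⊢
  split_ifs at hpt ⊢ <;> omega

theorem sum_Ioc_comp_le_of_dvd {R : Type*} [Semiring R] [PartialOrder R] [IsOrderedRing R]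
    {f : ℕ → ℕ} (hf : ∀ u, f u ∣ u) {g : ℕ → R} (hg : ∀ t, 0 ≤ g t) (N : ℕ) :
    ∑ u ∈ Ioc 0 N, g (f u) ≤ ∑ t ∈ (Ioc 0 N).image f, (N / t : ℕ) * g t := by
  rw [sum_comp]
  gcongr with t
  rw [nsmul_eq_mul]
  gcongr
  · exact hg t
  rw [← Nat.Ioc_filter_dvd_card_eq_div]
  exact card_le_card fun u hu => by
    rw [mem_filter] at hu ⊢
    exact ⟨hu.1, hu.2 ▸ hf u⟩

theorem Nat.sum_rpow_le_of_squarefull {σ : ℝ} (hσ : σ < -1 / 2) {T : Finset ℕ}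
    (hT : ∀ t ∈ T, t.Squarefull) :
    ∑ t ∈ T, (t : ℝ) ^ σ ≤ (∑' a : ℕ, (a : ℝ) ^ (2 * σ)) * ∑' b : ℕ, (b : ℝ) ^ (3 * σ) := by
  classical
  choose! a b hab using fun t (ht : t ∈ T) => (hT t ht).exists_sq_mul_cube_eq
  let g : ℕ → ℕ × ℕ := fun t => (a t, b t)
  let F : ℕ × ℕ → ℝ := fun x => (x.1 : ℝ) ^ (2 * σ) * (x.2 : ℝ) ^ (3 * σ)
  have hF : ∀ t ∈ T, (t : ℝ) ^ σ = F (g t) := by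
    intro t ht
    conv_lhs => rw [← hab t ht]
    push_cast
    rw [mul_rpow (by positivity) (by positivity), ← rpow_natCast_mul (by positivity),
      ← rpow_natCast_mul (by positivity), Nat.cast_ofNat, Nat.cast_ofNat]
  have hg : Set.InjOn g T := fun t ht t' ht' h => by
    rw [← hab t ht, ← hab t' ht']
    simp_all [g]
  have h2 : Summable fun a : ℕ => (a : ℝ) ^ (2 * σ) := Real.summable_nat_rpow.2 (by linarith)
  have h3 : Summable fun b : ℕ => (b : ℝ) ^ (3 * σ) := Real.summable_nat_rpow.2 (by linarith)
  rw [sum_congr rfl hF, ← sum_image (f := F) hg]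
  calc ∑ x ∈ T.image g, F x
      ≤ ∑ x ∈ (T.image g).image Prod.fst ×ˢ (T.image g).image Prod.snd, F x :=
        sum_le_sum_of_subset_of_nonneg subset_product fun _ _ _ => by positivity
    _ = (∑ x ∈ (T.image g).image Prod.fst, (x : ℝ) ^ (2 * σ)) *
          ∑ y ∈ (T.image g).image Prod.snd, (y : ℝ) ^ (3 * σ) := by
        rw [sum_product, sum_mul_sum]
    _ ≤ _ := mul_le_mul (h2.sum_le_tsum _ fun _ _ => by positivity)
        (h3.sum_le_tsum _ fun _ _ => by positivity) (sum_nonneg fun _ _ => by positivity)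
        (tsum_nonneg fun _ => by positivity)

theorem exists_sum_Ioc_squarefullPart_rpow_le {s : ℝ} (hs : s < 1 / 2) :
    ∃ Z > 0, ∀ N : ℕ, ∑ u ∈ Ioc 0 N, (squarefullPart u : ℝ) ^ s ≤ N * Z := by
  set Z := (∑' a : ℕ, (a : ℝ) ^ (2 * (s - 1))) * ∑' b : ℕ, (b : ℝ) ^ (3 * (s - 1))
  have hZ : ∀ T : Finset ℕ, (∀ t ∈ T, t.Squarefull) → ∑ t ∈ T, (t : ℝ) ^ (s - 1) ≤ Z :=
    fun T => Nat.sum_rpow_le_of_squarefull (by linarith)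
  have hZ1 : 1 ≤ Z := by
    have := hZ {1} (by intro t ht; rw [mem_singleton.1 ht]; exact Nat.squarefull_one)
    rwa [sum_singleton, Nat.cast_one, one_rpow] at this
  refine ⟨Z, by linarith, fun N => ?_⟩
  calc ∑ u ∈ Ioc 0 N, (squarefullPart u : ℝ) ^ s
      ≤ ∑ t ∈ (Ioc 0 N).image squarefullPart, (N / t : ℕ) * (t : ℝ) ^ s :=
        sum_Ioc_comp_le_of_dvd (g := fun t : ℕ => (t : ℝ) ^ s)
          (fun u => Dvd.intro_left _ (wpart_mul_squarefullPart u))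
          (fun _ => rpow_nonneg (Nat.cast_nonneg _) _) N
    _ ≤ ∑ t ∈ (Ioc 0 N).image squarefullPart, N * (t : ℝ) ^ (s - 1) := by
        refine sum_le_sum fun t ht => ?_
        obtain ⟨u, hu, rfl⟩ := mem_image.1 ht
        have ht0 : (squarefullPart u : ℝ) ≠ 0 :=
          Nat.cast_ne_zero.2 (squarefullPart_ne_zero (mem_Ioc.1 hu).1.ne')
        calc ((N / squarefullPart u : ℕ) : ℝ) * (squarefullPart u : ℝ) ^ s
            ≤ N / squarefullPart u * (squarefullPart u : ℝ) ^ s := by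
              gcongr
              exact Nat.cast_div_le
          _ = N * (squarefullPart u : ℝ) ^ (s - 1) := by
              rw [rpow_sub_one ht0]
              ring
    _ ≤ N * Z := by
        rw [← mul_sum]
        gcongr
        exact hZ _ fun t ht => by
          obtain ⟨u, -, rfl⟩ := mem_image.1 ht
          exact squarefull_squarefullPart u

theorem wpart_rpow_neg_le {U s : ℝ} (hU : 0 < U) (hs : 0 ≤ s) {u : ℕ} (hu : U ≤ u) :
    (wpart u : ℝ) ^ (-s) ≤ U ^ (-s) * (squarefullPart u : ℝ) ^ s := by
  have hu0 : (0 : ℝ) < u := hU.trans_le hu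
  have ht0 : (0 : ℝ) < squarefullPart u :=
    Nat.cast_pos.2 (Nat.pos_of_ne_zero (squarefullPart_ne_zero (by exact_mod_cast hu0.ne')))
  have hw : (wpart u : ℝ) = u / squarefullPart u :=
    eq_div_of_mul_eq ht0.ne' (by exact_mod_cast wpart_mul_squarefullPart u)
  rw [hw, rpow_neg (by positivity), div_rpow hu0.le ht0.le, inv_div, div_eq_mul_inv,
    ← rpow_neg hu0.le, mul_comm]
  exact mul_le_mul_of_nonneg_right (rpow_le_rpow_of_nonpos hU hu (by linarith)) (by positivity)

theorem stmt_11 (ε : ℝ) (hε0 : 0 < ε) (hε : ε < 1 / 2) :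
    ∃ C : ℝ, 0 < C ∧ ∀ U : ℝ, 1 ≤ U →
      ∑ u ∈ Finset.Ioc ⌊U⌋₊ ⌊2 * U⌋₊, (wpart u : ℝ) ^ (-(1 : ℝ) / 2 + ε) ≤
        C * U ^ ((1 : ℝ) / 2 + ε) := by
  obtain ⟨Z, hZ, hsum⟩ := exists_sum_Ioc_squarefullPart_rpow_le (s := 1 / 2 - ε) (by linarith)
  refine ⟨2 * Z, by positivity, fun U hU => ?_⟩
  have hU0 : 0 < U := by linarith
  calc ∑ u ∈ Ioc ⌊U⌋₊ ⌊2 * U⌋₊, (wpart u : ℝ) ^ (-(1 : ℝ) / 2 + ε)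
      ≤ ∑ u ∈ Ioc ⌊U⌋₊ ⌊2 * U⌋₊, U ^ (-(1 / 2 - ε)) * (squarefullPart u : ℝ) ^ (1 / 2 - ε) :=
        sum_le_sum fun u hu => by
          rw [show -(1 : ℝ) / 2 + ε = -(1 / 2 - ε) by ring]
          exact wpart_rpow_neg_le hU0 (by linarith) (Nat.lt_of_floor_lt (mem_Ioc.1 hu).1).le
    _ ≤ U ^ (-(1 / 2 - ε)) * ∑ u ∈ Ioc 0 ⌊2 * U⌋₊, (squarefullPart u : ℝ) ^ (1 / 2 - ε) := by
        rw [← mul_sum]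
        gcongr
        exact Nat.zero_le _
    _ ≤ U ^ (-(1 / 2 - ε)) * (2 * U * Z) := by
        gcongr
        exact (hsum _).trans (by gcongr; exact Nat.floor_le (by positivity))
    _ = 2 * Z * U ^ ((1 : ℝ) / 2 + ε) := by
        rw [show (1 : ℝ) / 2 + ε = 1 - (1 / 2 - ε) by ring, rpow_sub hU0, rpow_one,
          rpow_neg hU0.le]
        ring
end
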